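/- arXiv:2005.10015 — 2 statements merged into one kernel-verified Lean document; each statement's English description precedes it below -/
import Mathlib

section
/- Let p : E ⥤ B, F : B ⥤ B, G : E ⥤ E, with distributive law δ : F∘p ⟶ p∘G, and let s : B ⥤ E be a section of p equipped with a natural isomorphism σ : G ∘ s ≅ s ∘ F such that the composite F ≅ F∘p∘s ⟶(δ∘s) p∘G∘s ⟶(p∘σ) p∘s∘F ≅ F is the identity. Then s lifts to a functor from F-algebras to G-algebras, sending an F-algebra (A, a : F A ⟶ A) to the G-algebra (s A, s(a) ∘ σ_A : G(s A) ⟶ s A), and this lift is a section of the lifted functor p' : Alg G ⥤ Alg F induced by δ. -/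
/-!
The lift of `s` is itself a Beck lifting, namely the one of `s` determined by `σ`. Beck liftings
compose: lifting along `L` and then along `M` is the Beck lifting of `L ⋙ M` determined by the
pasted law `β L ≫ M α`. For `s ⋙ p` the pasted law is `δ s ≫ p σ`, which the hypothesis on `σ`
identifies with the identity law on `F`, and the Beck lifting of the identity functor along the
identity law is the identity.
-/

open CategoryTheory

variable {E B : Type*} [Category E] [Category B]

/-- The Beck lifting of `p : E ⥤ B` to algebra categories determined by a distributive law
`δ : F ∘ p ⟶ p ∘ G`: it sends a `G`-algebra `(X, a)` to the `F`-algebra `(p X, p a ∘ δ_X)`. -/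
def beckLift (p : E ⥤ B) (F : B ⥤ B) (G : E ⥤ E) (δ : p ⋙ F ⟶ G ⋙ p) :
    Endofunctor.Algebra G ⥤ Endofunctor.Algebra F where
  obj X := ⟨p.obj X.a, δ.app X.a ≫ p.map X.str⟩
  map {X Y} f :=
    { f := p.map f.f
      h := by
        dsimp
        rw [← Category.assoc, ← Functor.comp_map p F, δ.naturality f.f,
          Functor.comp_map, Category.assoc, ← p.map_comp, f.h, p.map_comp,
          Category.assoc] }
  map_id X := by ext; simp
  map_comp f g := by ext; simp

section

variable {C₁ C₂ C₃ : Type*} [Category C₁] [Category C₂] [Category C₃]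

@[simp]
theorem CategoryTheory.Endofunctor.Algebra.eqToHom_f {T : C₁ ⥤ C₁} {X Y : Algebra T}
    (h : X = Y) : (eqToHom h).f = eqToHom (congrArg Algebra.a h) := by
  subst h
  rfl

theorem beckLift_comp {T₁ : C₁ ⥤ C₁} {T₂ : C₂ ⥤ C₂} {T₃ : C₃ ⥤ C₃} (L : C₁ ⥤ C₂) (M : C₂ ⥤ C₃)
    (α : L ⋙ T₂ ⟶ T₁ ⋙ L) (β : M ⋙ T₃ ⟶ T₂ ⋙ M) :
    beckLift L T₂ T₁ α ⋙ beckLift M T₃ T₂ β =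
      beckLift (L ⋙ M) T₃ T₁ (Functor.whiskerLeft L β ≫ Functor.whiskerRight α M) := by
  fapply CategoryTheory.Functor.ext
  · intro X
    simp [beckLift]
  · intro X Y f
    ext
    simp only [Endofunctor.Algebra.comp_f, Endofunctor.Algebra.eqToHom_f]
    -- both `eqToHom`s are between definitionally equal carriers
    exact ((Category.id_comp _).trans (Category.comp_id _)).symm

theorem beckLift_eq_id {T : C₁ ⥤ C₁} (L : C₁ ⥤ C₁) (hL : L = 𝟭 C₁) (α : L ⋙ T ⟶ T ⋙ L)
    (hα : ∀ A : C₁, eqToHom (congrArg T.obj (Functor.congr_obj hL A)).symm ≫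
      α.app A ≫ eqToHom (Functor.congr_obj hL (T.obj A)) = 𝟙 (T.obj A)) :
    beckLift L T T α = 𝟭 _ := by
  subst hL
  simp only [eqToHom_refl, Category.id_comp, Category.comp_id] at hα
  fapply CategoryTheory.Functor.ext
  · intro X
    simp [beckLift, hα]
  · intro X Y f
    ext
    simp only [Endofunctor.Algebra.comp_f, Endofunctor.Algebra.eqToHom_f]
    exact ((Category.id_comp _).trans (Category.comp_id _)).symm

end

/-- let `p : E ⥤ B` carry a distributive law `δ : F ∘ p ⟶ p ∘ G`, and let
`s : B ⥤ E` be a section of `p` with a natural isomorphism `σ : G ∘ s ≅ s ∘ F` such that the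
composite `F ≅ F ∘ p ∘ s ⟶ p ∘ G ∘ s ⟶ p ∘ s ∘ F ≅ F` is the identity.  Then `s` lifts to a
functor from `F`-algebras to `G`-algebras, sending `(A, a)` to `(s A, s a ∘ σ_A)`, and this
lift is a section of the Beck lifting `p' : Alg G ⥤ Alg F` induced by `δ`. -/
theorem section_lifts_to_algebras
    (p : E ⥤ B) (F : B ⥤ B) (G : E ⥤ E) (δ : p ⋙ F ⟶ G ⋙ p)
    (s : B ⥤ E) (hs : s ⋙ p = 𝟭 B) (σ : s ⋙ G ≅ F ⋙ s)
    (hσ : ∀ A : B,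
      eqToHom (congrArg F.obj (Functor.congr_obj hs A)).symm ≫
          δ.app (s.obj A) ≫ p.map (σ.hom.app A) ≫
            eqToHom (Functor.congr_obj hs (F.obj A)) = 𝟙 (F.obj A)) :
    ∃ s' : Endofunctor.Algebra F ⥤ Endofunctor.Algebra G,
      (∀ X : Endofunctor.Algebra F,
        s'.obj X = ⟨s.obj X.a, σ.hom.app X.a ≫ s.map X.str⟩) ∧
      s' ⋙ beckLift p F G δ = 𝟭 (Endofunctor.Algebra F) := by
  refine ⟨beckLift s G F σ.hom, fun X => rfl, ?_⟩
  rw [beckLift_comp]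
  exact beckLift_eq_id _ hs _ fun A => by
    simpa only [NatTrans.comp_app, Functor.whiskerLeft_app, Functor.whiskerRight_app,
      Category.assoc] using hσ A
end

section
/- Let p : E ⥤ B be a functor, s : B ⥤ E a section of p with adjunction adj : s ⊣ C, and suppose p admits an image structure. Then for every object X of E and every morphism u : A ⟶ p(X) in B, there is a bijection between morphisms u_!(A) ⟶ X in E lying over the identity of p(X) and morphisms A ⟶ C(X) in B whose composite with the canonical map ι_X : C(X) ⟶ p(X) equals u, naturally realizing the fibered adjunction image ⊣ P over B. -/
open CategoryTheory

/-- let `p : E ⥤ B` be a functor with a section `s` (so `s ⋙ p = 𝟭 B`), an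
adjunction `adj : s ⊣ C`, and an image structure (for every `u : A ⟶ B'` a `p`-cocartesian
morphism `lam u : s A ⟶ push u` over `u`, with `lam (𝟙 A) = 𝟙`).  Then for every object `X`
of `E` and every morphism `u : A ⟶ p X` in `B`, there is a bijection between morphisms
`push u ⟶ X` lying over the identity of `p X` and morphisms `w : A ⟶ C X` whose composite
with the canonical map `ι_X : C X ⟶ p X` (obtained by applying `p` to the counit of `adj`)
equals `u` — realizing the fibered adjunction `image ⊣ P` over `B`. -/
theorem comprehension_with_image_bijection
    {E B : Type*} [Category E] [Category B] (p : E ⥤ B) (s : B ⥤ E)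
    (hs : s ⋙ p = 𝟭 B) (C : E ⥤ B) (adj : s ⊣ C)
    -- the image structure on `p`
    (push : ∀ {A B' : B}, (A ⟶ B') → E)
    (hpush : ∀ {A B' : B} (u : A ⟶ B'), p.obj (push u) = B')
    (lam : ∀ {A B' : B} (u : A ⟶ B'), s.obj A ⟶ push u)
    (hlam : ∀ {A B' : B} (u : A ⟶ B'),
      p.map (lam u) = eqToHom (Functor.congr_obj hs A) ≫ u ≫ eqToHom (hpush u).symm)
    (push_id : ∀ A : B, push (𝟙 A) = s.obj A)
    (lam_id : ∀ A : B, lam (𝟙 A) = eqToHom (push_id A).symm)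
    (cocart : ∀ {A B' : B} (u : A ⟶ B') (Z : E) (v : B' ⟶ p.obj Z) (g : s.obj A ⟶ Z),
      p.map g = eqToHom (Functor.congr_obj hs A) ≫ u ≫ v →
        ∃! h : push u ⟶ Z, lam u ≫ h = g ∧ p.map h = eqToHom (hpush u) ≫ v) :
    ∀ (X : E) {A : B} (u : A ⟶ p.obj X),
      Nonempty
        ({ h : push u ⟶ X // p.map h = eqToHom (hpush u) } ≃
          { w : A ⟶ C.obj X //
            w ≫ eqToHom ((Functor.congr_obj hs (C.obj X)).symm) ≫
              p.map (adj.counit.app X) = u }) := by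
  intro X A u
  -- condition on `g : s.obj A ⟶ X` side
  have key : ∀ w : A ⟶ C.obj X,
      p.map ((adj.homEquiv A X).symm w) =
        eqToHom (Functor.congr_obj hs A) ≫ w ≫
          eqToHom ((Functor.congr_obj hs (C.obj X)).symm) ≫ p.map (adj.counit.app X) := by
    intro w
    have h1 : (adj.homEquiv A X).symm w = s.map w ≫ adj.counit.app X := by
      simp [Adjunction.homEquiv_counit]
    have h2 := Functor.congr_hom hs w
    simp only [Functor.comp_map, Functor.id_map] at h2
    rw [h1, p.map_comp, h2]
    simp
  -- first equivalence: over-identity maps out of `push u` ≃ maps `s A ⟶ X` over `u`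
  have e1 : { h : push u ⟶ X // p.map h = eqToHom (hpush u) } ≃
      { g : s.obj A ⟶ X // p.map g = eqToHom (Functor.congr_obj hs A) ≫ u } := by
    have hc : ∀ g : s.obj A ⟶ X, p.map g = eqToHom (Functor.congr_obj hs A) ≫ u →
        ∃! h : push u ⟶ X, lam u ≫ h = g ∧ p.map h = eqToHom (hpush u) ≫ 𝟙 (p.obj X) := by
      intro g hg
      exact cocart u X (𝟙 (p.obj X)) g (by rw [hg]; simp)
    refine
      { toFun := fun h => ⟨lam u ≫ h.1, by rw [p.map_comp, hlam, h.2]; simp⟩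
        invFun := fun g => ⟨(hc g.1 g.2).choose, by
          have := (hc g.1 g.2).choose_spec.1.2
          simpa using this⟩
        left_inv := ?_
        right_inv := ?_ }
    · intro h
      have huniq := (hc (lam u ≫ h.1) (by rw [p.map_comp, hlam, h.2]; simp)).choose_spec.2
        h.1 ⟨rfl, by rw [h.2]; simp⟩
      exact Subtype.ext huniq.symm
    · intro g
      exact Subtype.ext (hc g.1 g.2).choose_spec.1.1
  -- second equivalence: adjunction transpose
  have e2 : { g : s.obj A ⟶ X // p.map g = eqToHom (Functor.congr_obj hs A) ≫ u } ≃
      { w : A ⟶ C.obj X //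
        w ≫ eqToHom ((Functor.congr_obj hs (C.obj X)).symm) ≫
          p.map (adj.counit.app X) = u } := by
    refine (adj.homEquiv A X).subtypeEquiv fun g => ?_
    constructor
    · intro hg
      have h := key (adj.homEquiv A X g)
      rw [Equiv.symm_apply_apply, hg] at h
      have := (cancel_epi (eqToHom (Functor.congr_obj hs A))).mp h.symm
      simpa using this
    · intro hw
      have h := key (adj.homEquiv A X g)
      rw [Equiv.symm_apply_apply, hw] at h
      exact h
  exact ⟨e1.trans e2⟩
end
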